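/- arXiv:2006.11152 — 11 statements merged into one kernel-verified Lean document; each statement's English description precedes it below -/
import Mathlib

section
/- For all propositional formulae A and B, A ≡≡ B holds if and only if, for every set S of literals with Var(S) ⊆ Var(A) ∩ Var(B), the formulae A ∪ S and B ∪ S are equisatisfiable. -/
/-- A literal is a variable with a polarity (`true` = positive). A clause is a
finite set of literals. -/
abbrev Clause (V : Type) := Finset (V × Bool)

/-- A formula is a (finite) set of clauses, read as a conjunction of disjunctions. -/
abbrev Formula (V : Type) := Finset (Clause V)

variable {V : Type} [DecidableEq V]

/-- An assignment satisfies a clause if it makes some literal of it true. -/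
def clauseSat (a : V → Bool) (c : Clause V) : Prop := ∃ l ∈ c, a l.1 = l.2

/-- An assignment satisfies a formula if it satisfies all its clauses. -/
def satF (a : V → Bool) (F : Formula V) : Prop := ∀ c ∈ F, clauseSat a c

/-- Entailment: every model of `A` is a model of `B`. -/
def entails (A B : Formula V) : Prop := ∀ a : V → Bool, satF a A → satF a B

/-- Satisfiability. -/
def satisfiable (F : Formula V) : Prop := ∃ a : V → Bool, satF a F

/-- The set of variables occurring (positively or negatively) in a formula. -/
def vars (F : Formula V) : Set V := {v | ∃ c ∈ F, ∃ b : Bool, (v, b) ∈ c}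

/-- Common equivalence: same consequences on the common variables. -/
def commonEquiv (A B : Formula V) : Prop :=
  ∀ C : Formula V, vars C ⊆ vars A ∩ vars B → (entails A C ↔ entails B C)

/-- An assignment satisfies a set of literals (viewed as unit clauses). -/
def satLits (a : V → Bool) (S : Set (V × Bool)) : Prop := ∀ l ∈ S, a l.1 = l.2

/-- A clause is Horn if it has at most one positive literal. -/
def hornClause (c : Clause V) : Prop := (c.filter (fun l => l.2 = true)).card ≤ 1

/-- A formula is Horn if all its clauses are. -/
def hornFormula (F : Formula V) : Prop := ∀ c ∈ F, hornClause c

/-- A clause is definite Horn if it has exactly one positive literal. -/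
def definiteClause (c : Clause V) : Prop := (c.filter (fun l => l.2 = true)).card = 1

/-- A formula is definite Horn if all its clauses are. -/
def definiteHorn (F : Formula V) : Prop := ∀ c ∈ F, definiteClause c

/-- The size of a formula: total number of literal occurrences. -/
def fsize (F : Formula V) : ℕ := ∑ c ∈ F, c.card

/-- The set of variables `P` as a set of positive unit clauses. -/
def unitsOf (P : Finset V) : Formula V := P.image (fun p => ({(p, true)} : Clause V))

/-- The definite Horn clause `P → x`. -/
def dClause (P : Finset V) (x : V) : Clause V :=
  P.image (fun p => ((p, false) : V × Bool)) ∪ {(x, true)}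

/-- `F ⊨ P`: the formula entails every variable of `P`. -/
def entailsV (F : Formula V) (P : Finset V) : Prop := entails F (unitsOf P)

/-- A definite Horn formula is single-head if no two distinct clauses share a head. -/
def singleHead (F : Formula V) : Prop :=
  ∀ (P P' : Finset V) (x : V), x ∉ P → x ∉ P' →
    dClause P x ∈ F → dClause P' x ∈ F → P = P'

/-- The body of a clause: its negated variables. -/
def body (c : Clause V) : Finset V := (c.filter (fun l => l.2 = false)).image Prod.fst

/-- `F^x`: the clauses of `F` containing neither `x` nor `¬x`. -/
def restr (F : Formula V) (x : V) : Formula V :=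
  F.filter (fun c => ((x, true) : V × Bool) ∉ c ∧ ((x, false) : V × Bool) ∉ c)

/-- `F[⊥/x]`: delete the clauses containing `¬x`, remove the literal `x` elsewhere. -/
def substFalse (F : Formula V) (x : V) : Formula V :=
  (F.filter (fun c => ((x, false) : V × Bool) ∉ c)).image (fun c => c.erase (x, true))

/-- `newvar P x F`: summarize the body part `P` by the new variable `x`. -/
def newvar (P : Finset V) (x : V) (F : Formula V) : Formula V :=
  ((F.filter (fun c => ∀ p ∈ P, ((p, false) : V × Bool) ∈ c)).image
      (fun c => (c \ P.image (fun p => ((p, false) : V × Bool))) ∪ {((x, false) : V × Bool)}))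
    ∪ (F.filter (fun c => ¬ ∀ p ∈ P, ((p, false) : V × Bool) ∈ c))
    ∪ {dClause P x}


/-- Membership in `vars` via a literal. -/
lemma mem_vars {F : Formula V} {v : V} : v ∈ vars F ↔ ∃ c ∈ F, ∃ l ∈ c, l.1 = v := by
  constructor
  · rintro ⟨c, hc, b, hb⟩; exact ⟨c, hc, (v, b), hb, rfl⟩
  · rintro ⟨c, hc, l, hl, h⟩; exact ⟨c, hc, l.2, by rw [← h] at *; simpa using hl⟩

lemma aux_fwd {A B : Formula V} (hCE : commonEquiv A B) (S : Set (V × Bool))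
    (hS : Prod.fst '' S ⊆ vars A ∩ vars B) :
    (∃ a : V → Bool, satF a A ∧ satLits a S) → (∃ a : V → Bool, satF a B ∧ satLits a S) := by
  classical
  rintro ⟨a, haA, haS⟩
  by_contra hB
  set X : Finset V := (A.biUnion (fun cl => cl.image Prod.fst)) ∩
      (B.biUnion (fun cl => cl.image Prod.fst)) with hX
  have hXiff : ∀ v : V, v ∈ X ↔ v ∈ vars A ∩ vars B := by
    intro v
    simp only [hX, Finset.mem_inter, Finset.mem_biUnion, Finset.mem_image, Set.mem_inter_iff,
      mem_vars]
  set c : Clause V := X.image (fun v => (v, ! a v)) with hc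
  have hvarsC : vars ({c} : Formula V) ⊆ vars A ∩ vars B := by
    intro v hv
    rcases mem_vars.1 hv with ⟨c', hc', l, hl, h⟩
    simp only [Finset.mem_singleton] at hc'
    subst hc'
    rcases Finset.mem_image.1 hl with ⟨w, hw, hwl⟩
    have : w = v := by rw [← hwl] at h; exact h
    subst this
    exact (hXiff w).1 hw
  have hBc : entails B {c} := by
    intro b hbB cl hcl
    simp only [Finset.mem_singleton] at hcl
    subst hcl
    by_contra hnc
    apply hB
    refine ⟨b, hbB, ?_⟩
    intro l hl
    have hvl : l.1 ∈ vars A ∩ vars B := hS ⟨l, hl, rfl⟩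
    have hlX : l.1 ∈ X := (hXiff l.1).2 hvl
    have hba : b l.1 = a l.1 := by
      by_contra hne
      apply hnc
      refine ⟨(l.1, ! a l.1), Finset.mem_image.2 ⟨l.1, hlX, rfl⟩, ?_⟩
      cases h1 : a l.1 <;> cases h2 : b l.1 <;> simp_all
    rw [hba]; exact haS l hl
  have hAc : entails A {c} := (hCE {c} hvarsC).2 hBc
  rcases hAc a haA c (Finset.mem_singleton_self c) with ⟨l, hl, hal⟩
  rcases Finset.mem_image.1 hl with ⟨w, _, hwl⟩
  subst hwl
  simp at hal

lemma aux_bwd {A B : Formula V}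
    (h : ∀ S : Set (V × Bool), Prod.fst '' S ⊆ vars A ∩ vars B →
        ((∃ a : V → Bool, satF a A ∧ satLits a S) ↔ (∃ a : V → Bool, satF a B ∧ satLits a S)))
    (C : Formula V) (hC : vars C ⊆ vars A ∩ vars B) (hA : entails A C) : entails B C := by
  intro b hbB c hc
  set S : Set (V × Bool) := {l | l.1 ∈ vars A ∩ vars B ∧ l.2 = b l.1} with hSdef
  have hS : Prod.fst '' S ⊆ vars A ∩ vars B := by
    rintro v ⟨l, hl, rfl⟩; exact hl.1
  obtain ⟨a, haA, haS⟩ := (h S hS).2 ⟨b, hbB, fun l hl => hl.2.symm⟩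
  rcases hA a haA c hc with ⟨l, hl, hal⟩
  have hlv : l.1 ∈ vars A ∩ vars B := hC (mem_vars.2 ⟨c, hc, l, hl, rfl⟩)
  have : a l.1 = b l.1 := haS (l.1, b l.1) ⟨hlv, rfl⟩
  exact ⟨l, hl, by rw [← this]; exact hal⟩

/-- `A ≡≡ B` iff for every set `S` of literals on the common
variables, `A ∪ S` and `B ∪ S` are equisatisfiable. -/
theorem commonEquiv_iff_equisat (A B : Formula V) :
    commonEquiv A B ↔
      ∀ S : Set (V × Bool), Prod.fst '' S ⊆ vars A ∩ vars B →
        ((∃ a : V → Bool, satF a A ∧ satLits a S) ↔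
          (∃ a : V → Bool, satF a B ∧ satLits a S)) := by
  constructor
  · intro hCE S hS
    have hCE' : commonEquiv B A := fun C hC => by
      rw [Set.inter_comm] at hC; exact (hCE C hC).symm
    exact ⟨aux_fwd hCE S hS, aux_fwd hCE' S (by rwa [Set.inter_comm])⟩
  · intro h C hC
    have h' : ∀ S : Set (V × Bool), Prod.fst '' S ⊆ vars B ∩ vars A →
        ((∃ a : V → Bool, satF a B ∧ satLits a S) ↔ (∃ a : V → Bool, satF a A ∧ satLits a S)) :=
      fun S hS => (h S (by rwa [Set.inter_comm])).symm
    exact ⟨aux_bwd h C hC, aux_bwd h' C (by rwa [Set.inter_comm]) ⟩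
end

section
/- For all propositional formulae A and B, A ≡≡ B holds if and only if, for every set S of literals that contains exactly one literal for each variable of Var(A) ∩ Var(B) and no literals on other variables, the formulae A ∪ S and B ∪ S are equisatisfiable. -/
variable {V : Type} [DecidableEq V]

/-- The variables of a formula, as a Finset. -/
def varsF (F : Formula V) : Finset V := F.biUnion (fun c => c.image Prod.fst)

lemma mem_varsF {v : V} {F : Formula V} : v ∈ varsF F ↔ v ∈ vars F := by
  simp only [varsF, Finset.mem_biUnion, Finset.mem_image, vars, Set.mem_setOf_eq]
  constructor
  · rintro ⟨c, hc, ⟨x, b⟩, hl, rfl⟩; exact ⟨c, hc, b, hl⟩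
  · rintro ⟨c, hc, b, hb⟩; exact ⟨c, hc, (v, b), hb, rfl⟩

lemma satF_agree {a a' : V → Bool} {C : Formula V}
    (h : ∀ v ∈ vars C, a v = a' v) (hs : satF a C) : satF a' C := by
  intro c hc
  obtain ⟨l, hl, hal⟩ := hs c hc
  refine ⟨l, hl, ?_⟩
  rw [← h l.1 ⟨c, hc, l.2, by simpa using hl⟩]
  exact hal

lemma entails_of_equisat (A B : Formula V)
    (h : ∀ S : Set (V × Bool),
        (∀ v ∈ vars A ∩ vars B, ∃! b : Bool, (v, b) ∈ S) →
        (∀ l ∈ S, l.1 ∈ vars A ∩ vars B) →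
        ((∃ a : V → Bool, satF a A ∧ satLits a S) ↔
          (∃ a : V → Bool, satF a B ∧ satLits a S)))
    (C : Formula V) (hC : vars C ⊆ vars A ∩ vars B)
    (hAC : entails A C) : entails B C := by
  intro a haB
  set S : Set (V × Bool) := (fun v => (v, a v)) '' (vars A ∩ vars B) with hSdef
  have hmem : ∀ l : V × Bool, l ∈ S ↔ l.1 ∈ vars A ∩ vars B ∧ l.2 = a l.1 := by
    intro l; constructor
    · rintro ⟨v, hv, rfl⟩; exact ⟨hv, rfl⟩
    · rintro ⟨h1, h2⟩
      exact ⟨l.1, h1, by rw [← Prod.mk.eta (p := l), h2]⟩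
  have h1 : ∀ v ∈ vars A ∩ vars B, ∃! b : Bool, (v, b) ∈ S := by
    intro v hv
    exact ⟨a v, (hmem _).2 ⟨hv, rfl⟩, fun b hb => ((hmem _).1 hb).2⟩
  have h2 : ∀ l ∈ S, l.1 ∈ vars A ∩ vars B := fun l hl => ((hmem _).1 hl).1
  obtain ⟨a', ha'A, ha'S⟩ :=
    (h S h1 h2).mpr ⟨a, haB, fun l hl => ((hmem _).1 hl).2.symm⟩
  have hagree : ∀ v ∈ vars C, a' v = a v := fun v hv =>
    ha'S (v, a v) ((hmem _).2 ⟨hC hv, rfl⟩)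
  exact satF_agree hagree (hAC a' ha'A)

/-- `A ≡≡ B` iff for every set `S` of literals containing exactly
one literal per common variable and none on other variables, `A ∪ S` and
`B ∪ S` are equisatisfiable. -/
theorem commonEquiv_iff_equisat_complete (A B : Formula V) :
    commonEquiv A B ↔
      ∀ S : Set (V × Bool),
        (∀ v ∈ vars A ∩ vars B, ∃! b : Bool, (v, b) ∈ S) →
        (∀ l ∈ S, l.1 ∈ vars A ∩ vars B) →
        ((∃ a : V → Bool, satF a A ∧ satLits a S) ↔
          (∃ a : V → Bool, satF a B ∧ satLits a S)) := by
  classical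
  constructor
  · -- forward
    intro h S hS1 hS2
    have hb : ∀ v ∈ vars A ∩ vars B,
        ∃ b : Bool, (v, b) ∈ S ∧ ∀ b' : Bool, (v, b') ∈ S → b' = b := by
      intro v hv
      obtain ⟨b, hb1, hb2⟩ := hS1 v hv
      exact ⟨b, hb1, hb2⟩
    choose! bf hbf1 hbf2 using hb
    set D : Finset V := varsF A ∩ varsF B with hD
    have hDmem : ∀ v : V, v ∈ D ↔ v ∈ vars A ∩ vars B := by
      intro v
      simp [hD, Finset.mem_inter, mem_varsF, Set.mem_inter_iff]
    set c : Clause V := D.image (fun v => (v, !(bf v))) with hc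
    have hlits : ∀ a : V → Bool, satLits a S ↔ ∀ v ∈ D, a v = bf v := by
      intro a
      constructor
      · intro hs v hv
        exact hs (v, bf v) (hbf1 v ((hDmem v).1 hv))
      · intro hs l hl
        have hcom := hS2 l hl
        have h2 : l.2 = bf l.1 := hbf2 l.1 hcom l.2 (by rwa [Prod.mk.eta])
        rw [h2]
        exact hs l.1 ((hDmem l.1).2 hcom)
    have hcs : ∀ a : V → Bool, clauseSat a c ↔ ¬ satLits a S := by
      intro a
      rw [hlits]
      constructor
      · rintro ⟨l, hl, hal⟩ hall
        obtain ⟨v, hv, rfl⟩ := Finset.mem_image.1 hl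
        have := hall v hv
        simp only at hal
        rw [this] at hal
        simp at hal
      · intro hnot
        push_neg at hnot
        obtain ⟨v, hv, hne⟩ := hnot
        exact ⟨(v, !(bf v)), Finset.mem_image_of_mem _ hv, by
          simpa using Bool.eq_not_iff.mpr hne⟩
    have key : ∀ F : Formula V,
        entails F {c} ↔ ¬ ∃ a : V → Bool, satF a F ∧ satLits a S := by
      intro F
      constructor
      · rintro hent ⟨a, haF, haS⟩
        obtain ⟨l, hl, hal⟩ := hent a haF c (Finset.mem_singleton_self c)
        exact ((hcs a).1 ⟨l, hl, hal⟩) haS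
      · intro hno a haF c' hc'
        rw [Finset.mem_singleton] at hc'
        subst hc'
        exact (hcs a).2 (fun haS => hno ⟨a, haF, haS⟩)
    have hvs : vars ({c} : Formula V) ⊆ vars A ∩ vars B := by
      rintro v ⟨c', hc', b, hb⟩
      rw [Finset.mem_singleton] at hc'
      subst hc'
      obtain ⟨w, hw, hwe⟩ := Finset.mem_image.1 hb
      have : w = v := congrArg Prod.fst hwe
      subst this
      exact (hDmem w).1 hw
    have := h {c} hvs
    rw [key A, key B] at this
    exact not_iff_not.mp this
  · -- backward
    intro h C hC
    exact ⟨entails_of_equisat A B h C hC,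
      entails_of_equisat B A
        (fun S h1 h2 => (h S
          (by rwa [Set.inter_comm] at h1)
          (by rwa [Set.inter_comm] at h2)).symm)
        C (by rwa [Set.inter_comm] at hC)⟩
end

section
/- If Var(B) ⊆ Var(A), then A ≡≡ B holds if and only if both: (i) A ⊨ B, and (ii) for every consistent set S of literals that contains exactly one literal for each variable of Var(B) and no literals on other variables, the satisfiability of B ∪ S implies the satisfiability of A ∪ S. -/
variable {V : Type} [DecidableEq V]

/-- if `Var(B) ⊆ Var(A)`, then `A ≡≡ B` iff `A ⊨ B` and for every
consistent set `S` of literals with exactly one literal per variable of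
`Var(B)` and none on other variables, satisfiability of `B ∪ S` implies
satisfiability of `A ∪ S`. -/
theorem commonEquiv_iff_entails_and_sat (A B : Formula V) (hv : vars B ⊆ vars A) :
    commonEquiv A B ↔
      (entails A B ∧
        ∀ S : Set (V × Bool),
          (∃ a : V → Bool, satLits a S) →
          (∀ v ∈ vars B, ∃! b : Bool, (v, b) ∈ S) →
          (∀ l ∈ S, l.1 ∈ vars B) →
          ((∃ a : V → Bool, satF a B ∧ satLits a S) →
            (∃ a : V → Bool, satF a A ∧ satLits a S))) := by
  constructor
  · intro hce
    refine ⟨(hce B (fun v hv' => ⟨hv hv', hv'⟩)).mpr (fun a h => h), ?_⟩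
    rintro S ⟨a0, ha0⟩ huniq hsub ⟨aB, hB, hBS⟩
    by_contra hno
    set VB : Finset V := B.biUnion (fun c => c.image Prod.fst) with hVBdef
    have hVB : ∀ v, v ∈ VB ↔ v ∈ vars B := by
      intro v
      simp only [hVBdef, Finset.mem_biUnion, Finset.mem_image, vars, Set.mem_setOf_eq]
      constructor
      · rintro ⟨c, hc, ⟨x, b⟩, hm, rfl⟩; exact ⟨c, hc, b, hm⟩
      · rintro ⟨c, hc, b, hm⟩; exact ⟨c, hc, (v, b), hm, rfl⟩
    set cS : Clause V := VB.image (fun v => (v, !(a0 v))) with hcSdef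
    have hAC : entails A {cS} := by
      intro a hA c hc
      rw [Finset.mem_singleton] at hc; subst hc
      have hnS : ¬ satLits a S := fun hSa => hno ⟨a, hA, hSa⟩
      simp only [satLits] at hnS
      push_neg at hnS
      obtain ⟨l, hlS, hla⟩ := hnS
      refine ⟨(l.1, !(a0 l.1)), ?_, ?_⟩
      · exact Finset.mem_image.mpr ⟨l.1, (hVB l.1).mpr (hsub l hlS), rfl⟩
      · have he : a0 l.1 = l.2 := ha0 l hlS
        show a l.1 = !(a0 l.1)
        rw [he]
        revert hla; cases a l.1 <;> cases l.2 <;> simp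
    have hvarsC : vars {cS} ⊆ vars A ∩ vars B := by
      intro v hvC
      obtain ⟨c, hc, b, hb⟩ := hvC
      rw [Finset.mem_singleton] at hc; subst hc
      obtain ⟨w, hw, hwe⟩ := Finset.mem_image.mp hb
      have hwv : w = v := congrArg Prod.fst hwe
      subst hwv
      have hvB := (hVB w).mp hw
      exact ⟨hv hvB, hvB⟩
    have hBC : entails B {cS} := (hce {cS} hvarsC).mp hAC
    obtain ⟨l, hl, hla⟩ := hBC aB hB cS (Finset.mem_singleton_self _)
    obtain ⟨v, hvVB, rfl⟩ := Finset.mem_image.mp hl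
    obtain ⟨b, hbS, _⟩ := huniq v ((hVB v).mp hvVB)
    have h1 : a0 v = b := ha0 _ hbS
    have h2 : aB v = b := hBS _ hbS
    simp only at hla
    rw [h1, h2] at hla
    simp at hla
  · rintro ⟨hAB, hS⟩ C hC
    constructor
    · intro hAC a haB
      set S : Set (V × Bool) := {l | l.1 ∈ vars B ∧ l.2 = a l.1} with hSdef
      have h1 : ∃ a', satLits a' S := ⟨a, fun l hl => hl.2.symm⟩
      have h2 : ∀ v ∈ vars B, ∃! b : Bool, (v, b) ∈ S := by
        intro v hv'
        exact ⟨a v, ⟨hv', rfl⟩, fun b hb => hb.2⟩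
      have h3 : ∀ l ∈ S, l.1 ∈ vars B := fun l hl => hl.1
      obtain ⟨a', hA', hS'⟩ := hS S h1 h2 h3 ⟨a, haB, fun l hl => hl.2.symm⟩
      have hC' := hAC a' hA'
      intro c hc
      obtain ⟨l, hl, hla⟩ := hC' c hc
      refine ⟨l, hl, ?_⟩
      have hlv : l.1 ∈ vars B := (hC ⟨c, hc, l.2, by simpa using hl⟩).2
      have heq : a' l.1 = a l.1 := hS' (l.1, a l.1) ⟨hlv, rfl⟩
      rw [← heq]; exact hla
    · intro hBC a haA
      exact hBC a (hAB a haA)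
end

section
/- If Var(A) ∩ Var(C) ⊆ Var(B), then A ≡≡ B and B ≡≡ C together imply A ≡≡ C. -/
variable {V : Type} [DecidableEq V]

/-- limited transitivity of common equivalence. -/
theorem commonEquiv_trans (A B C : Formula V)
    (hv : vars A ∩ vars C ⊆ vars B)
    (hAB : commonEquiv A B) (hBC : commonEquiv B C) :
    commonEquiv A C := by
  intro D hD
  have h1 : vars D ⊆ vars A ∩ vars B := fun v hvD =>
    ⟨(hD hvD).1, hv (hD hvD)⟩
  have h2 : vars D ⊆ vars B ∩ vars C := fun v hvD =>
    ⟨hv (hD hvD), (hD hvD).2⟩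
  exact (hAB D h1).trans (hBC D h2)
end

section
/- If A ≡≡ A', Var(A) ⊆ Var(A'), and (Var(A') \ Var(A)) ∩ Var(B) = ∅, then A ≡≡ B holds if and only if A' ≡≡ B holds. -/
variable {V : Type} [DecidableEq V]

/-- insensitivity of common equivalence to new variables. -/
theorem commonEquiv_new_variables (A A' B : Formula V)
    (h : commonEquiv A A')
    (hv : vars A ⊆ vars A')
    (hd : (vars A' \ vars A) ∩ vars B = ∅) :
    (commonEquiv A B ↔ commonEquiv A' B) := by
  have hint : vars A ∩ vars B = vars A' ∩ vars B := by
    apply Set.Subset.antisymm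
    · exact Set.inter_subset_inter_left _ hv
    · intro v hvv
      refine ⟨?_, hvv.2⟩
      by_contra hna
      have : v ∈ (vars A' \ vars A) ∩ vars B := ⟨⟨hvv.1, hna⟩, hvv.2⟩
      rw [hd] at this
      exact this
  constructor
  · intro hab C hC
    have hC' : vars C ⊆ vars A ∩ vars B := by rw [hint]; exact hC
    have hCA : vars C ⊆ vars A ∩ vars A' := fun v hvv =>
      ⟨(hC' hvv).1, hv (hC' hvv).1⟩
    rw [← h C hCA]
    exact hab C hC'
  · intro hab C hC
    have hC' : vars C ⊆ vars A' ∩ vars B := by rw [← hint]; exact hC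
    have hCA : vars C ⊆ vars A ∩ vars A' := fun v hvv =>
      ⟨(hC hvv).1, hv (hC hvv).1⟩
    rw [h C hCA]
    exact hab C hC'
end

section
/- If A ≡≡ B and Var(C) ⊆ Var(A) ∩ Var(B), then A ∪ C ≡≡ B ∪ C. -/
variable {V : Type} [DecidableEq V]

/-!
A model of `B` can be transported to a model of `A` that agrees with it on any finite set `W` of
common variables: otherwise `A` would entail the clause "some variable of `W` differs from its
value under the model", which is stated over common variables and is false in that model of `B`.
A model of `B ∪ C` thus yields a model of `A ∪ C` that agrees with it on the variables of `C`
and of the consequence `D`, so the consequences of `A ∪ C` over common variables pass to `B ∪ C`.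
-/

omit [DecidableEq V] in
theorem commonEquiv.symm {A B : Formula V} (h : commonEquiv A B) : commonEquiv B A :=
  fun C hC => (h C (Set.inter_comm _ _ ▸ hC)).symm

theorem vars_union (A C : Formula V) : vars (A ∪ C) = vars A ∪ vars C := by
  ext v
  simp only [vars, Finset.mem_union, or_and_right, exists_or, Set.mem_union, Set.mem_ofPred_eq]

theorem satF_union {a : V → Bool} {A C : Formula V} :
    satF a (A ∪ C) ↔ satF a A ∧ satF a C := by
  simp only [satF, Finset.mem_union, or_imp, forall_and]

omit [DecidableEq V] in
theorem satF_congr {a a' : V → Bool} {F : Formula V} (h : ∀ v ∈ vars F, a v = a' v) :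
    satF a F ↔ satF a' F := by
  refine forall₂_congr fun c hc => exists_congr fun l => and_congr_right fun hl => ?_
  rw [h l.1 ⟨c, hc, l.2, hl⟩]

def varsFinset (F : Formula V) : Finset V := F.biUnion fun c => c.image Prod.fst

@[simp]
theorem coe_varsFinset (F : Formula V) : (varsFinset F : Set V) = vars F := by
  ext v
  simp [varsFinset, vars]

def disagreeClause (a : V → Bool) (W : Finset V) : Clause V := W.image fun v => (v, !a v)

theorem clauseSat_disagreeClause {a a' : V → Bool} {W : Finset V} :
    clauseSat a' (disagreeClause a W) ↔ ∃ v ∈ W, a' v ≠ a v := by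
  simp only [clauseSat, disagreeClause, Finset.mem_image, exists_exists_and_eq_and,
    Bool.eq_not, ne_eq]

theorem vars_singleton_disagreeClause (a : V → Bool) (W : Finset V) :
    vars ({disagreeClause a W} : Formula V) = W := by
  ext v
  simp only [vars, disagreeClause, Finset.mem_singleton, exists_eq_left, Finset.mem_image,
    Prod.mk.injEq, Set.mem_ofPred_eq, Finset.mem_coe]
  grind

theorem commonEquiv.exists_satF_eqOn {A B : Formula V} (h : commonEquiv A B) {a : V → Bool}
    (ha : satF a B) {W : Finset V} (hW : (W : Set V) ⊆ vars A ∩ vars B) :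
    ∃ a', satF a' A ∧ ∀ v ∈ W, a' v = a v := by
  have hB : ¬ entails B {disagreeClause a W} := fun hBW => by
    simpa [clauseSat_disagreeClause] using hBW a ha _ (Finset.mem_singleton_self _)
  have hA : ¬ entails A {disagreeClause a W} :=
    mt (h _ (vars_singleton_disagreeClause a W ▸ hW)).mp hB
  simpa [entails, satF, clauseSat_disagreeClause] using hA

theorem commonEquiv.entails_union {A B C D : Formula V} (h : commonEquiv A B)
    (hC : vars C ⊆ vars A ∩ vars B) (hD : vars D ⊆ vars A ∩ vars B)
    (hACD : entails (A ∪ C) D) : entails (B ∪ C) D := by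
  intro a ha
  rw [satF_union] at ha
  have hW : (varsFinset (C ∪ D) : Set V) ⊆ vars A ∩ vars B := by
    rw [coe_varsFinset, vars_union]
    exact Set.union_subset hC hD
  obtain ⟨a', ha'A, ha'a⟩ := h.exists_satF_eqOn ha.1 hW
  have hagree : ∀ v ∈ vars C ∪ vars D, a' v = a v := fun v hv =>
    ha'a v (by rwa [← Finset.mem_coe, coe_varsFinset, vars_union])
  have ha'C : satF a' C :=
    (satF_congr fun v hv => hagree v (Or.inl hv)).mpr ha.2
  exact (satF_congr fun v hv => hagree v (Or.inr hv)).mp (hACD a' (satF_union.mpr ⟨ha'A, ha'C⟩))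

/-- monotonicity of common equivalence under conjunction with a
formula on the shared variables. -/
theorem commonEquiv_union (A B C : Formula V)
    (h : commonEquiv A B) (hC : vars C ⊆ vars A ∩ vars B) :
    commonEquiv (A ∪ C) (B ∪ C) := by
  have hA : vars (A ∪ C) = vars A := by
    rw [vars_union, Set.union_eq_left]
    exact hC.trans Set.inter_subset_left
  have hB : vars (B ∪ C) = vars B := by
    rw [vars_union, Set.union_eq_left]
    exact hC.trans Set.inter_subset_right
  intro D hD
  rw [hA, hB] at hD
  exact ⟨h.entails_union hC hD,
    h.symm.entails_union (Set.inter_comm _ _ ▸ hC) (Set.inter_comm _ _ ▸ hD)⟩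
end

section
/- Let a, b, c, l, m, n be pairwise distinct variables and let B = { {¬a,¬b,¬c,l}, {¬a,¬b,¬c,m}, {¬a,¬b,¬c,n} }. Then every CNF formula C with Var(C) ⊆ {a,b,c,l,m,n} that is equivalent to B (i.e., B ⊨ C and C ⊨ B) satisfies |C| ≥ |B| = 12. -/
variable {V : Type} [DecidableEq V]

/-- The formula `B = {abc → l, abc → m, abc → n}`. -/
def exampleB (a b c l m n : V) : Formula V :=
  { {(a, false), (b, false), (c, false), (l, true)},
    {(a, false), (b, false), (c, false), (m, true)},
    {(a, false), (b, false), (c, false), (n, true)} }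


lemma mem_of_flip {V : Type} [DecidableEq V] {α β : V → Bool} {cx : Clause V} {v : V}
    (hns : ¬ clauseSat α cx) (hs : clauseSat β cx)
    (hagree : ∀ w, w ≠ v → α w = β w) : (v, β v) ∈ cx := by
  obtain ⟨lit, hl, he⟩ := hs
  by_cases h : lit.1 = v
  · obtain ⟨l1, l2⟩ := lit
    simp only at h
    subst h
    simp only at he
    rw [he]; exact hl
  · exact absurd ⟨lit, hl, by rw [hagree _ h]; exact he⟩ hns

lemma key_clause {V : Type} [DecidableEq V] {C : Formula V} {a b c x : V}
    (hab : a ≠ b) (hac : a ≠ c) (hbc : b ≠ c)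
    (hax : a ≠ x) (hbx : b ≠ x) (hcx : c ≠ x)
    (hns : ¬ satF (fun v => decide (v ≠ x)) C)
    (hA : satF (fun v => decide (v ≠ x ∧ v ≠ a)) C)
    (hB : satF (fun v => decide (v ≠ x ∧ v ≠ b)) C)
    (hC : satF (fun v => decide (v ≠ x ∧ v ≠ c)) C)
    (hT : satF (fun _ => true) C) :
    ∃ cx ∈ C, ¬ clauseSat (fun v => decide (v ≠ x)) cx ∧
      (x, true) ∈ cx ∧ 4 ≤ cx.card := by
  rw [satF] at hns
  push_neg at hns
  obtain ⟨cx, hcxC, hnsat⟩ := hns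
  have ha' : (a, false) ∈ cx := by
    have := mem_of_flip (v := a) hnsat (hA cx hcxC) (fun w hw => by simp [hw])
    simpa using this
  have hb' : (b, false) ∈ cx := by
    have := mem_of_flip (v := b) hnsat (hB cx hcxC) (fun w hw => by simp [hw])
    simpa using this
  have hc' : (c, false) ∈ cx := by
    have := mem_of_flip (v := c) hnsat (hC cx hcxC) (fun w hw => by simp [hw])
    simpa using this
  have hx' : (x, true) ∈ cx := by
    have := mem_of_flip (v := x) hnsat (hT cx hcxC) (fun w hw => by simp [hw])
    simpa using this
  refine ⟨cx, hcxC, hnsat, hx', ?_⟩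
  calc (4 : ℕ) = ({(a, false), (b, false), (c, false), (x, true)} : Clause V).card := by
        rw [Finset.card_insert_of_notMem (by simp [hab, hac, hax]),
          Finset.card_insert_of_notMem (by simp [hbc, hbx]),
          Finset.card_insert_of_notMem (by simp [hcx]),
          Finset.card_singleton]
    _ ≤ cx.card := Finset.card_le_card (by
        intro y hy
        simp only [Finset.mem_insert, Finset.mem_singleton] at hy
        rcases hy with rfl | rfl | rfl | rfl <;> assumption)

/-- every CNF formula over `{a,b,c,l,m,n}` equivalent to `B` is at
least as large as `B`, whose size is `12`. -/
theorem exampleB_minimal (a b c l m n : V)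
    (hd : List.Pairwise (· ≠ ·) [a, b, c, l, m, n]) :
    fsize (exampleB a b c l m n) = 12 ∧
      ∀ C : Formula V, vars C ⊆ ({a, b, c, l, m, n} : Set V) →
        entails (exampleB a b c l m n) C → entails C (exampleB a b c l m n) →
        fsize (exampleB a b c l m n) ≤ fsize C := by
  simp only [List.pairwise_cons, List.mem_cons, List.not_mem_nil, List.mem_singleton] at hd
  obtain ⟨h1, h2, h3, h4, h5, -⟩ := hd
  have hab : a ≠ b := h1 b (by tauto)
  have hac : a ≠ c := h1 c (by tauto)
  have hal : a ≠ l := h1 l (by tauto)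
  have ham : a ≠ m := h1 m (by tauto)
  have han : a ≠ n := h1 n (by tauto)
  have hbc : b ≠ c := h2 c (by tauto)
  have hbl : b ≠ l := h2 l (by tauto)
  have hbm : b ≠ m := h2 m (by tauto)
  have hbn : b ≠ n := h2 n (by tauto)
  have hcl : c ≠ l := h3 l (by tauto)
  have hcm : c ≠ m := h3 m (by tauto)
  have hcn : c ≠ n := h3 n (by tauto)
  have hlm : l ≠ m := h4 m (by tauto)
  have hln : l ≠ n := h4 n (by tauto)
  have hmn : m ≠ n := h5 n (by tauto)
  have c4 : ∀ x : V, a ≠ x → b ≠ x → c ≠ x →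
      ({(a, false), (b, false), (c, false), (x, true)} : Clause V).card = 4 := by
    intro x hax hbx hcx
    rw [Finset.card_insert_of_notMem (by simp [hab, hac, hax]),
      Finset.card_insert_of_notMem (by simp [hbc, hbx]),
      Finset.card_insert_of_notMem (by simp [hcx]),
      Finset.card_singleton]
  have hne : ∀ x y : V, x ≠ y →
      ({(a, false), (b, false), (c, false), (x, true)} : Clause V) ≠
        {(a, false), (b, false), (c, false), (y, true)} := by
    intro x y hxy h
    have : (x, true) ∈ ({(a, false), (b, false), (c, false), (y, true)} : Clause V) :=
      h ▸ (by simp)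
    simp [hxy] at this
  constructor
  · rw [fsize, exampleB]
    rw [Finset.sum_insert (by
        simp only [Finset.mem_insert, Finset.mem_singleton]
        push_neg
        exact ⟨hne l m hlm, hne l n hln⟩),
      Finset.sum_insert (by
        simp only [Finset.mem_singleton]
        exact hne m n hmn),
      Finset.sum_singleton]
    rw [c4 l hal hbl hcl, c4 m ham hbm hcm, c4 n han hbn hcn]
    norm_num
  · intro C _ hBC hCB
    have hBA : ∀ β : V → Bool, β a = false → satF β C := by
      intro β hβ
      refine hBC β ?_
      intro cl hcl
      simp only [exampleB, Finset.mem_insert, Finset.mem_singleton] at hcl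
      rcases hcl with rfl | rfl | rfl <;> exact ⟨(a, false), by simp, hβ⟩
    have hBB : ∀ β : V → Bool, β b = false → satF β C := by
      intro β hβ
      refine hBC β ?_
      intro cl hcl
      simp only [exampleB, Finset.mem_insert, Finset.mem_singleton] at hcl
      rcases hcl with rfl | rfl | rfl <;> exact ⟨(b, false), by simp, hβ⟩
    have hBCc : ∀ β : V → Bool, β c = false → satF β C := by
      intro β hβ
      refine hBC β ?_
      intro cl hcl
      simp only [exampleB, Finset.mem_insert, Finset.mem_singleton] at hcl
      rcases hcl with rfl | rfl | rfl <;> exact ⟨(c, false), by simp, hβ⟩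
    have hBT : satF (fun _ => true) C := by
      refine hBC _ ?_
      intro cl hcl
      simp only [exampleB, Finset.mem_insert, Finset.mem_singleton] at hcl
      rcases hcl with rfl | rfl | rfl
      · exact ⟨(l, true), by simp, rfl⟩
      · exact ⟨(m, true), by simp, rfl⟩
      · exact ⟨(n, true), by simp, rfl⟩
    have hN : ∀ x : V, a ≠ x → b ≠ x → c ≠ x →
        ({(a, false), (b, false), (c, false), (x, true)} : Clause V) ∈ exampleB a b c l m n →
        ¬ satF (fun v => decide (v ≠ x)) C := by
      intro x hax hbx hcx hmem h
      obtain ⟨⟨v, e⟩, hv, he⟩ := hCB _ h _ hmem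
      simp only [Finset.mem_insert, Finset.mem_singleton, Prod.mk.injEq] at hv
      rcases hv with ⟨rfl, rfl⟩ | ⟨rfl, rfl⟩ | ⟨rfl, rfl⟩ | ⟨rfl, rfl⟩ <;>
        simp_all
    obtain ⟨cL, hcLC, hcLns, hcLx, hcL4⟩ :=
      key_clause hab hac hbc hal hbl hcl
        (hN l hal hbl hcl (by simp [exampleB]))
        (hBA _ (by simp)) (hBB _ (by simp)) (hBCc _ (by simp)) hBT
    obtain ⟨cM, hcMC, hcMns, hcMx, hcM4⟩ :=
      key_clause hab hac hbc ham hbm hcm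
        (hN m ham hbm hcm (by simp [exampleB]))
        (hBA _ (by simp)) (hBB _ (by simp)) (hBCc _ (by simp)) hBT
    obtain ⟨cN, hcNC, hcNns, hcNx, hcN4⟩ :=
      key_clause hab hac hbc han hbn hcn
        (hN n han hbn hcn (by simp [exampleB]))
        (hBA _ (by simp)) (hBB _ (by simp)) (hBCc _ (by simp)) hBT
    have hLM : cL ≠ cM := by
      rintro rfl
      exact hcMns ⟨(l, true), hcLx, by simp [hlm]⟩
    have hLN : cL ≠ cN := by
      rintro rfl
      exact hcNns ⟨(l, true), hcLx, by simp [hln]⟩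
    have hMN : cM ≠ cN := by
      rintro rfl
      exact hcNns ⟨(m, true), hcMx, by simp [hmn]⟩
    have hsub : ({cL, cM, cN} : Formula V) ⊆ C := by
      intro y hy
      simp only [Finset.mem_insert, Finset.mem_singleton] at hy
      rcases hy with rfl | rfl | rfl <;> assumption
    have hsum : ∑ d ∈ ({cL, cM, cN} : Formula V), d.card ≤ fsize C :=
      Finset.sum_le_sum_of_subset hsub
    rw [Finset.sum_insert (by
        simp only [Finset.mem_insert, Finset.mem_singleton]
        push_neg
        exact ⟨hLM, hLN⟩),
      Finset.sum_insert (by simpa using hMN),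
      Finset.sum_singleton] at hsum
    rw [fsize, exampleB]
    rw [Finset.sum_insert (by
        simp only [Finset.mem_insert, Finset.mem_singleton]
        push_neg
        exact ⟨hne l m hlm, hne l n hln⟩),
      Finset.sum_insert (by
        simp only [Finset.mem_singleton]
        exact hne m n hmn),
      Finset.sum_singleton]
    rw [c4 l hal hbl hcl, c4 m ham hbm hcm, c4 n han hbn hcn]
    omega
end

section
/- There exists a definite Horn formula A and a variable x ∈ Var(A) such that every CNF formula B with Var(B) = Var(A) \ {x} and B ≡≡ A satisfies |B| > |A|. (In other words, every formula expressing the forgetting of x from A is strictly larger than A.) -/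
variable {V : Type} [DecidableEq V]

namespace Stmt12

def b1v (i : Bool) : ℕ := if i then 2 else 0
def b2v (i : Bool) : ℕ := if i then 3 else 1
def zv (j : Bool) : ℕ := if j then 6 else 5

def A0 : Formula ℕ :=
  { {(0,false),(1,false),(4,true)}, {(2,false),(3,false),(4,true)},
    {(4,false),(5,true)}, {(4,false),(6,true)} }

def pim (i j : Bool) : Clause ℕ := {(b1v i, false), (b2v i, false), (zv j, true)}

def asg0 (i j : Bool) (v : ℕ) : Bool :=
  decide (v = b1v i) || decide (v = b2v i) || decide (v = zv (!j))

def asgZ (i : Bool) (v : ℕ) : Bool :=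
  decide (v = b1v i) || decide (v = b2v i) || decide (v = 4) || decide (v = 5) || decide (v = 6)

def pv (i k : Bool) : ℕ := if k then b2v i else b1v i

def asgB (i j k : Bool) (v : ℕ) : Bool := asg0 i j v && !decide (v = pv i k)

lemma dhA0 : definiteHorn A0 := by unfold definiteHorn definiteClause A0; decide

lemma fsizeA0 : fsize A0 = 10 := by unfold fsize A0; decide

lemma mem_varsA0_le {v : ℕ} (h : v ∈ vars A0) : v ≤ 6 := by
  obtain ⟨c, hc, b, hb⟩ := h
  simp only [A0, Finset.mem_insert, Finset.mem_singleton] at hc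
  rcases hc with rfl | rfl | rfl | rfl <;>
    simp only [Finset.mem_insert, Finset.mem_singleton, Prod.mk.injEq] at hb <;> omega

lemma le_mem_varsA0 {v : ℕ} (h : v ≤ 6) : v ∈ vars A0 := by
  interval_cases v
  · exact ⟨{(0,false),(1,false),(4,true)}, by decide, false, by decide⟩
  · exact ⟨{(0,false),(1,false),(4,true)}, by decide, false, by decide⟩
  · exact ⟨{(2,false),(3,false),(4,true)}, by decide, false, by decide⟩
  · exact ⟨{(2,false),(3,false),(4,true)}, by decide, false, by decide⟩
  · exact ⟨{(4,false),(5,true)}, by decide, false, by decide⟩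
  · exact ⟨{(4,false),(5,true)}, by decide, true, by decide⟩
  · exact ⟨{(4,false),(6,true)}, by decide, true, by decide⟩


lemma entails_pim (i j : Bool) : entails A0 {pim i j} := by
  intro a ha c hc
  rw [Finset.mem_singleton] at hc; subst hc
  by_cases hb1 : a (b1v i) = false
  · exact ⟨(b1v i, false), by simp [pim], hb1⟩
  by_cases hb2 : a (b2v i) = false
  · exact ⟨(b2v i, false), by simp [pim], hb2⟩
  have hbody := ha {(b1v i, false), (b2v i, false), (4, true)} (by cases i <;> decide)
  obtain ⟨l, hl, hsat⟩ := hbody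
  simp only [Finset.mem_insert, Finset.mem_singleton] at hl
  have h4 : a 4 = true := by
    rcases hl with rfl | rfl | rfl
    · exact absurd hsat hb1
    · exact absurd hsat hb2
    · exact hsat
  have hz := ha {(4, false), (zv j, true)} (by cases j <;> decide)
  obtain ⟨l', hl', hsat'⟩ := hz
  simp only [Finset.mem_insert, Finset.mem_singleton] at hl'
  have hzj : a (zv j) = true := by
    rcases hl' with rfl | rfl
    · simp [h4] at hsat'
    · exact hsat'
  exact ⟨(zv j, true), by simp [pim], hzj⟩

lemma not_sat_pim (i j : Bool) : ¬ clauseSat (asg0 i j) (pim i j) := by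
  cases i <;> cases j <;> (unfold clauseSat pim asg0 b1v b2v zv; decide)

lemma modelZ (i : Bool) : satF (asgZ i) A0 := by
  cases i <;> (unfold satF clauseSat A0 asgZ b1v b2v; decide)

lemma modelB (i j k : Bool) : satF (asgB i j k) A0 := by
  cases i <;> cases j <;> cases k <;>
    (unfold satF clauseSat A0 asgB asg0 pv b1v b2v zv; decide)

lemma asgZ_eq_asg0 {i j : Bool} {v : ℕ} (h6 : v ≤ 6) (h4 : v ≠ 4) (hz : v ≠ zv j) :
    asgZ i v = asg0 i j v := by
  cases i <;> cases j <;> (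
    simp only [zv, if_true, if_false, Bool.ite_eq_true_distrib] at hz
    interval_cases v <;> simp_all <;> rfl)

lemma asgB_eq_asg0 {i j k : Bool} {v : ℕ} (hp : v ≠ pv i k) :
    asgB i j k v = asg0 i j v := by
  simp [asgB, hp]

lemma asgZ_zv (i j : Bool) : asgZ i (zv j) = true := by
  cases i <;> cases j <;> decide

lemma asgB_pv (i j k : Bool) : asgB i j k (pv i k) = false := by
  simp [asgB]

lemma key (B : Formula ℕ) (hvars : vars B = vars A0 \ {4}) (hce : commonEquiv B A0)
    (i j : Bool) :
    ∃ c ∈ B, (b1v i, false) ∈ c ∧ (b2v i, false) ∈ c ∧ (zv j, true) ∈ c ∧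
      ∀ l ∈ c, asg0 i j l.1 ≠ l.2 := by
  -- variables of pim are common
  have hmemv : ∀ v : ℕ, v ≤ 6 → v ≠ 4 → v ∈ vars B ∩ vars A0 := by
    intro v h6 h4
    have hv : v ∈ vars A0 := le_mem_varsA0 h6
    exact ⟨by rw [hvars]; exact ⟨hv, h4⟩, hv⟩
  have hsubp : vars {pim i j} ⊆ vars B ∩ vars A0 := by
    rintro v ⟨c, hc, b, hb⟩
    rw [Finset.mem_singleton] at hc; subst hc
    simp only [pim, Finset.mem_insert, Finset.mem_singleton, Prod.mk.injEq] at hb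
    rcases hb with ⟨rfl, _⟩ | ⟨rfl, _⟩ | ⟨rfl, _⟩ <;>
      exact hmemv _ (by cases i <;> cases j <;> decide) (by cases i <;> cases j <;> decide)
  -- B is falsified by asg0 i j
  have hBpim : entails B {pim i j} := (hce _ hsubp).mpr (entails_pim i j)
  have hnB : ¬ satF (asg0 i j) B := fun h =>
    not_sat_pim i j (hBpim _ h _ (Finset.mem_singleton_self _))
  -- find a falsified clause c in B
  have : ∃ c ∈ B, ¬ clauseSat (asg0 i j) c := by
    by_contra hall
    push_neg at hall
    exact hnB hall
  obtain ⟨c, hcB, hfc0⟩ := this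
  have hfc : ∀ l ∈ c, asg0 i j l.1 ≠ l.2 := by
    intro l hl h
    exact hfc0 ⟨l, hl, h⟩
  -- A0 entails {c}
  have hvarc : ∀ l ∈ c, l.1 ≤ 6 ∧ l.1 ≠ 4 := by
    intro l hl
    have hlB : l.1 ∈ vars B := ⟨c, hcB, l.2, by simpa using hl⟩
    rw [hvars] at hlB
    exact ⟨mem_varsA0_le hlB.1, hlB.2⟩
  have hAc : entails A0 {c} := by
    refine (hce {c} ?_).mp ?_
    · rintro v ⟨c', hc', b, hb⟩
      rw [Finset.mem_singleton] at hc'; subst hc'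
      have := hvarc (v, b) hb
      exact hmemv v this.1 this.2
    · intro a ha c' hc'
      rw [Finset.mem_singleton] at hc'; rw [hc']
      exact ha c hcB
  -- (zv j, true) ∈ c
  have hz : (zv j, true) ∈ c := by
    by_contra hz
    obtain ⟨l, hl, hsat⟩ := hAc (asgZ i) (modelZ i) c (Finset.mem_singleton_self c)
    have hv := hvarc l hl
    by_cases hlz : l.1 = zv j
    · have h2 : l.2 = true := by rw [hlz, asgZ_zv i j] at hsat; exact hsat.symm
      have : l = (zv j, true) := Prod.ext hlz h2
      exact hz (this ▸ hl)
    · exact hfc l hl (by rw [← asgZ_eq_asg0 hv.1 hv.2 hlz]; exact hsat)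
  -- body literals ∈ c
  have hb : ∀ k : Bool, (pv i k, false) ∈ c := by
    intro k
    by_contra hbk
    obtain ⟨l, hl, hsat⟩ := hAc (asgB i j k) (modelB i j k) c (Finset.mem_singleton_self c)
    by_cases hlp : l.1 = pv i k
    · have h2 : l.2 = false := by rw [hlp, asgB_pv i j k] at hsat; exact hsat.symm
      have : l = (pv i k, false) := Prod.ext hlp h2
      exact hbk (this ▸ hl)
    · exact hfc l hl (by rw [← asgB_eq_asg0 (k := k) hlp]; exact hsat)
  exact ⟨c, hcB, hb false, hb true, hz, hfc⟩
lemma distinct_aux {c c' : Clause ℕ} {i j i' j' : Bool}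
    (hfc : ∀ l ∈ c, asg0 i j l.1 ≠ l.2)
    (hz' : (zv j', true) ∈ c') (hb' : (b1v i', false) ∈ c')
    (hne : ¬ (i = i' ∧ j = j')) : c ≠ c' := by
  rintro rfl
  cases i <;> cases j <;> cases i' <;> cases j' <;>
    first
      | exact hne ⟨rfl, rfl⟩
      | exact hfc _ hz' (by decide)
      | exact hfc _ hb' (by decide)

lemma card3 {c : Clause ℕ} {i j : Bool} (h1 : (b1v i, false) ∈ c)
    (h2 : (b2v i, false) ∈ c) (h3 : (zv j, true) ∈ c) : 3 ≤ c.card := by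
  have hsub : ({(b1v i, false), (b2v i, false), (zv j, true)} : Clause ℕ) ⊆ c := by
    intro l hl
    simp only [Finset.mem_insert, Finset.mem_singleton] at hl
    rcases hl with rfl | rfl | rfl <;> assumption
  have hcard : ({(b1v i, false), (b2v i, false), (zv j, true)} : Clause ℕ).card = 3 := by
    cases i <;> cases j <;> decide
  calc 3 = _ := hcard.symm
    _ ≤ c.card := Finset.card_le_card hsub
end Stmt12

/-- there is a definite Horn formula `A` and a variable
`x ∈ Var(A)` such that every CNF formula `B` with `Var(B) = Var(A) \ {x}` and
`B ≡≡ A` is strictly larger than `A`. -/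
theorem forgetting_increases_size :
    ∃ (A : Formula ℕ) (x : ℕ), definiteHorn A ∧ x ∈ vars A ∧
      ∀ B : Formula ℕ, vars B = vars A \ {x} → commonEquiv B A → fsize A < fsize B := by
  refine ⟨Stmt12.A0, 4, Stmt12.dhA0, Stmt12.le_mem_varsA0 (by norm_num), ?_⟩
  intro B hvars hce
  obtain ⟨c1, hc1B, hc1a, hc1b, hc1z, hc1f⟩ := Stmt12.key B hvars hce false false
  obtain ⟨c2, hc2B, hc2a, hc2b, hc2z, hc2f⟩ := Stmt12.key B hvars hce false true
  obtain ⟨c3, hc3B, hc3a, hc3b, hc3z, hc3f⟩ := Stmt12.key B hvars hce true false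
  obtain ⟨c4, hc4B, hc4a, hc4b, hc4z, hc4f⟩ := Stmt12.key B hvars hce true true
  have h12 : c1 ≠ c2 := Stmt12.distinct_aux hc1f hc2z hc2a (by simp)
  have h13 : c1 ≠ c3 := Stmt12.distinct_aux hc1f hc3z hc3a (by simp)
  have h14 : c1 ≠ c4 := Stmt12.distinct_aux hc1f hc4z hc4a (by simp)
  have h23 : c2 ≠ c3 := Stmt12.distinct_aux hc2f hc3z hc3a (by simp)
  have h24 : c2 ≠ c4 := Stmt12.distinct_aux hc2f hc4z hc4a (by simp)
  have h34 : c3 ≠ c4 := Stmt12.distinct_aux hc3f hc4z hc4a (by simp)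
  set S : Formula ℕ := {c1, c2, c3, c4} with hS
  have hsubS : S ⊆ B := by
    intro c hc
    simp only [hS, Finset.mem_insert, Finset.mem_singleton] at hc
    rcases hc with rfl | rfl | rfl | rfl <;> assumption
  have hcardS : S.card = 4 := by
    rw [hS]
    rw [Finset.card_insert_of_notMem (by simp [h12, h13, h14]),
        Finset.card_insert_of_notMem (by simp [h23, h24]),
        Finset.card_insert_of_notMem (by simp [h34]),
        Finset.card_singleton]
  have h3all : ∀ c ∈ S, 3 ≤ c.card := by
    intro c hc
    simp only [hS, Finset.mem_insert, Finset.mem_singleton] at hc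
    rcases hc with rfl | rfl | rfl | rfl
    · exact Stmt12.card3 hc1a hc1b hc1z
    · exact Stmt12.card3 hc2a hc2b hc2z
    · exact Stmt12.card3 hc3a hc3b hc3z
    · exact Stmt12.card3 hc4a hc4b hc4z
  have hlow : 12 ≤ ∑ c ∈ S, c.card := by
    calc (12 : ℕ) = ∑ _c ∈ S, 3 := by rw [Finset.sum_const, hcardS]; rfl
      _ ≤ ∑ c ∈ S, c.card := Finset.sum_le_sum h3all
  have hmono : ∑ c ∈ S, c.card ≤ ∑ c ∈ B, c.card :=
    Finset.sum_le_sum_of_subset hsubS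
  rw [Stmt12.fsizeA0]
  calc (10 : ℕ) < 12 := by norm_num
    _ ≤ ∑ c ∈ S, c.card := hlow
    _ ≤ fsize B := hmono
end

section
/- Forgetting can exponentially increase size: for every n ≥ 1, let a(i,1), a(i,2), g(i) for 1 ≤ i ≤ n and x be pairwise distinct variables, and let A_n = { {¬a(i,j), g(i)} : 1 ≤ i ≤ n, j ∈ {1,2} } ∪ { {¬g(1),...,¬g(n), x} }. Then every CNF formula B with Var(B) = Var(A_n) \ {g(1),...,g(n)} and B ≡≡ A_n contains at least 2^n clauses. -/
variable {V : Type} [DecidableEq V]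

/-- The formula
`A_n = { a(i,j) → g(i) : i, j } ∪ { g(1)...g(n) → x }`. -/
def forgetExample (n : ℕ) (a : Fin n → Fin 2 → V) (g : Fin n → V) (x : V) : Formula V :=
  (Finset.univ.image
      (fun p : Fin n × Fin 2 => ({(a p.1 p.2, false), (g p.1, true)} : Clause V)))
    ∪ { (Finset.univ.image (fun i : Fin n => ((g i, false) : V × Bool)))
          ∪ ({((x, true) : V × Bool)} : Clause V) }

/-- every CNF formula expressing the forgetting of
`g(1), ..., g(n)` from `A_n` has at least `2^n` clauses. -/
theorem forgetting_exponential (n : ℕ) (hn : 1 ≤ n)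
    (a : Fin n → Fin 2 → V) (g : Fin n → V) (x : V)
    (ha : Function.Injective fun p : Fin n × Fin 2 => a p.1 p.2)
    (hg : Function.Injective g)
    (hag : ∀ i j k, a i j ≠ g k)
    (hax : ∀ i j, a i j ≠ x)
    (hgx : ∀ i, g i ≠ x) :
    ∀ B : Formula V,
      vars B = vars (forgetExample n a g x) \ Set.range g →
      commonEquiv B (forgetExample n a g x) →
      2 ^ n ≤ B.card := by
    classical
  intro B hvars hce
  set A := forgetExample n a g x with hA
  -- membership facts about A
  have hsmall_mem : ∀ (i : Fin n) (j : Fin 2),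
      ({(a i j, false), (g i, true)} : Clause V) ∈ A :=
    fun i j => Finset.mem_union_left _
      (Finset.mem_image.2 ⟨(i, j), Finset.mem_univ _, rfl⟩)
  have hbig_mem :
      ((Finset.univ.image (fun i : Fin n => ((g i, false) : V × Bool)))
          ∪ ({((x, true) : V × Bool)} : Clause V)) ∈ A :=
    Finset.mem_union_right _ (Finset.mem_singleton_self _)
  have hx_mem : x ∈ vars A :=
    ⟨_, hbig_mem, true, Finset.mem_union_right _ (Finset.mem_singleton_self _)⟩
  have ha_mem : ∀ i j, a i j ∈ vars A := fun i j =>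
    ⟨_, hsmall_mem i j, false, Finset.mem_insert_self _ _⟩
  -- every variable of B is an a-variable or x
  have hvB : ∀ v ∈ vars B, (∃ i j, v = a i j) ∨ v = x := by
    intro v hv
    rw [hvars] at hv
    obtain ⟨⟨c, hc, b, hb⟩, hvg⟩ := hv
    rcases Finset.mem_union.1 hc with h | h
    · obtain ⟨p, -, rfl⟩ := Finset.mem_image.1 h
      rcases Finset.mem_insert.1 hb with h' | h'
      · left; exact ⟨p.1, p.2, congrArg Prod.fst h'⟩
      · exact absurd ⟨p.1, (congrArg Prod.fst (Finset.mem_singleton.1 h')).symm⟩ hvg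
    · rw [Finset.mem_singleton.1 h] at hb
      rcases Finset.mem_union.1 hb with h' | h'
      · obtain ⟨i, -, hi⟩ := Finset.mem_image.1 h'
        exact absurd ⟨i, (congrArg Prod.fst hi)⟩ hvg
      · right; exact congrArg Prod.fst (Finset.mem_singleton.1 h')
  -- A entails B
  have hAB : entails A B := by
    have hsubB : vars B ⊆ vars B ∩ vars A := fun v hv => ⟨hv, (hvars ▸ hv).1⟩
    exact (hce B hsubB).mp (fun t ht => ht)
  -- the clause C_s and assignment α_s for each selection s
  set Cl : (Fin n → Fin 2) → Clause V := fun s =>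
    (Finset.univ.image (fun i : Fin n => ((a i (s i), false) : V × Bool)))
      ∪ {((x, true) : V × Bool)} with hCl
  set al : (Fin n → Fin 2) → V → Bool := fun s v =>
    if ∃ i, v = a i (s i) then true else false with hal
  have halx : ∀ s, al s x = false := by
    intro s
    simp only [hal]
    rw [if_neg]
    rintro ⟨i, hi⟩; exact hax i (s i) hi.symm
  have hala1 : ∀ s i, al s (a i (s i)) = true := by
    intro s i
    simp only [hal]
    rw [if_pos ⟨i, rfl⟩]
  have hala0 : ∀ s i j, j ≠ s i → al s (a i j) = false := by
    intro s i j hj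
    simp only [hal]
    rw [if_neg]
    rintro ⟨k, hk⟩
    have := ha (a₁ := (i, j)) (a₂ := (k, s k)) hk
    rw [Prod.mk.injEq] at this
    exact hj (this.2.trans (congrArg s this.1.symm))
  -- A entails each Cl s
  have hACl : ∀ s, entails A {Cl s} := by
    intro s t ht c hc
    rw [Finset.mem_singleton.1 hc]
    by_cases hx : t x = true
    · exact ⟨(x, true), Finset.mem_union_right _ (Finset.mem_singleton_self _), hx⟩
    · obtain ⟨l, hl, hvl⟩ := ht _ hbig_mem
      rcases Finset.mem_union.1 hl with h | h
      · obtain ⟨i, -, rfl⟩ := Finset.mem_image.1 h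
        obtain ⟨l', hl', hvl'⟩ := ht _ (hsmall_mem i (s i))
        rcases Finset.mem_insert.1 hl' with h' | h'
        · refine ⟨(a i (s i), false),
            Finset.mem_union_left _ (Finset.mem_image.2 ⟨i, Finset.mem_univ _, rfl⟩), ?_⟩
          rw [← h']; exact hvl'
        · rw [Finset.mem_singleton.1 h'] at hvl'
          exact absurd hvl' (by simpa using hvl)
      · rw [Finset.mem_singleton.1 h] at hvl
        exact absurd hvl hx
  -- B entails each Cl s
  have hBCl : ∀ s, entails B {Cl s} := by
    intro s
    have hsub : vars {Cl s} ⊆ vars B ∩ vars A := by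
      intro v hv
      obtain ⟨c, hc, b, hb⟩ := hv
      rw [Finset.mem_singleton.1 hc] at hb
      have hv' : (∃ i j, v = a i j) ∨ v = x := by
        rcases Finset.mem_union.1 hb with h | h
        · obtain ⟨i, -, hi⟩ := Finset.mem_image.1 h
          exact Or.inl ⟨i, s i, (congrArg Prod.fst hi).symm⟩
        · exact Or.inr (congrArg Prod.fst (Finset.mem_singleton.1 h))
      have hvA : v ∈ vars A := by
        rcases hv' with ⟨i, j, rfl⟩ | rfl
        · exact ha_mem i j
        · exact hx_mem
      have hvg : v ∉ Set.range g := by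
        rintro ⟨k, rfl⟩
        rcases hv' with ⟨i, j, hij⟩ | h
        · exact hag i j k hij.symm
        · exact hgx k h
      exact ⟨hvars ▸ ⟨hvA, hvg⟩, hvA⟩
    exact (hce _ hsub).mpr (hACl s)
  -- α_s falsifies Cl s, hence falsifies some clause of B
  have key : ∀ s, ∃ c, c ∈ B ∧ ¬ clauseSat (al s) c := by
    intro s
    by_contra h
    push_neg at h
    have hsB : satF (al s) B := fun c hc => h c hc
    obtain ⟨l, hl, hvl⟩ := hBCl s (al s) hsB (Cl s) (Finset.mem_singleton_self _)
    rcases Finset.mem_union.1 hl with h' | h'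
    · obtain ⟨i, -, rfl⟩ := Finset.mem_image.1 h'
      rw [hala1 s i] at hvl; exact Bool.true_eq_false ▸ (by simpa using hvl)
    · rw [Finset.mem_singleton.1 h'] at hvl
      rw [halx s] at hvl; simp at hvl
  choose f hfB hf using key
  -- key injectivity
  have fin2 : ∀ u v : Fin 2, u ≠ v → ∀ w : Fin 2, w ≠ u → w = v := by decide
  have hinj : ∀ s s', f s = f s' → s = s' := by
    intro s s' hfe
    by_contra hne
    obtain ⟨i, hi⟩ := Function.ne_iff.1 hne
    have hls : ∀ l ∈ f s, al s l.1 ≠ l.2 := by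
      intro l hl hv; exact hf s ⟨l, hl, hv⟩
    have hls' : ∀ l ∈ f s, al s' l.1 ≠ l.2 := by
      intro l hl hv; exact hf s' ⟨l, hfe ▸ hl, hv⟩
    -- assignment γ
    set γ : V → Bool := fun v =>
      if ∃ i', v = g i' then (if v = g i then false else true)
      else if (v = a i 0 ∨ v = a i 1) then false else al s v with hγ
    have hγgi : γ (g i) = false := by
      have h1 : ∃ i', g i = g i' := ⟨i, rfl⟩
      simp only [hγ]
      rw [if_pos h1]
      simp
    have hγg : ∀ i', i' ≠ i → γ (g i') = true := by
      intro i' hi'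
      have h1 : ∃ k, g i' = g k := ⟨i', rfl⟩
      have h2 : g i' ≠ g i := fun h => hi' (hg h)
      simp only [hγ]
      rw [if_pos h1]
      simp [h2]
    have hγai : ∀ j : Fin 2, γ (a i j) = false := by
      intro j
      have h1 : ¬ ∃ k, a i j = g k := by rintro ⟨k, hk⟩; exact hag i j k hk
      have h2 : a i j = a i 0 ∨ a i j = a i 1 := by
        have : j = 0 ∨ j = 1 := by fin_cases j; exacts [Or.inl rfl, Or.inr rfl]
        rcases this with rfl | rfl
        · exact Or.inl rfl
        · exact Or.inr rfl
      simp only [hγ]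
      rw [if_neg h1]
      exact if_pos h2
    have hγa : ∀ (i' : Fin n) (j : Fin 2), i' ≠ i → γ (a i' j) = al s (a i' j) := by
      intro i' j hi'
      have h1 : ¬ ∃ k, a i' j = g k := by rintro ⟨k, hk⟩; exact hag i' j k hk
      have h2 : ¬ (a i' j = a i 0 ∨ a i' j = a i 1) := by
        rintro (h | h)
        · have := ha (a₁ := (i', j)) (a₂ := (i, 0)) h
          rw [Prod.mk.injEq] at this
          exact hi' this.1
        · have := ha (a₁ := (i', j)) (a₂ := (i, 1)) h
          rw [Prod.mk.injEq] at this
          exact hi' this.1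
      simp only [hγ]
      rw [if_neg h1]
      exact if_neg h2
    have hγx : γ x = false := by
      simp only [hγ]
      rw [if_neg (by rintro ⟨k, hk⟩; exact hgx k hk.symm)]
      rw [if_neg (by rintro (h | h) <;> exact hax i _ h.symm)]
      exact halx s
    -- γ satisfies A
    have hsatA : satF γ A := by
      intro c hc
      rcases Finset.mem_union.1 hc with h | h
      · obtain ⟨p, -, rfl⟩ := Finset.mem_image.1 h
        by_cases hp : p.1 = i
        · refine ⟨(a p.1 p.2, false), Finset.mem_insert_self _ _, ?_⟩
          rw [hp]; exact hγai p.2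
        · refine ⟨(g p.1, true),
            Finset.mem_insert_of_mem (Finset.mem_singleton_self _), ?_⟩
          exact hγg p.1 hp
      · rw [Finset.mem_singleton.1 h]
        exact ⟨(g i, false),
          Finset.mem_union_left _ (Finset.mem_image.2 ⟨i, Finset.mem_univ _, rfl⟩), hγgi⟩
    -- hence γ satisfies f s, contradiction
    obtain ⟨l, hl, hγl⟩ := hAB γ hsatA (f s) (hfB s)
    obtain ⟨lv, lb⟩ := l
    have hlsb : al s lv ≠ lb := hls _ hl
    have hlsb' : al s' lv ≠ lb := hls' _ hl
    have hvl : (∃ i' j, lv = a i' j) ∨ lv = x := hvB lv ⟨f s, hfB s, lb, hl⟩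
    simp only at hγl
    rcases hvl with ⟨i', j, rfl⟩ | rfl
    · by_cases hii : i' = i
      · subst hii
        by_cases hj : j = s i'
        · subst hj
          rw [hala1] at hlsb
          rw [hala0 s' i' _ hi] at hlsb'
          cases lb
          · exact hlsb' rfl
          · exact hlsb rfl
        · have hj' : j = s' i' := fin2 _ _ hi j hj
          subst hj'
          rw [hala1] at hlsb'
          rw [hala0 s i' _ hj] at hlsb
          cases lb
          · exact hlsb rfl
          · exact hlsb' rfl
      · rw [hγa i' j hii] at hγl
        exact hlsb hγl
    · rw [hγx] at hγl
      rw [halx] at hlsb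
      exact hlsb hγl
  -- conclude by counting
  have hcard : (Finset.univ : Finset (Fin n → Fin 2)).card ≤ B.card :=
    Finset.card_le_card_of_injOn f (fun s _ => hfB s) (fun s _ s' _ h => hinj s s' h)
  calc 2 ^ n = (Finset.univ : Finset (Fin n → Fin 2)).card := by
        simp [Finset.card_univ]
    _ ≤ B.card := hcard
end

section
/- For every definite Horn formula F, every finite set of variables P, and every variable x with x ∉ Var(F) and x ∉ P, the common equivalence F ≡≡ newvar(P,F) holds. -/
variable {V : Type} [DecidableEq V]

/-- for every definite Horn formula `F`, finite set of variables
`P` and fresh variable `x`, the common equivalence `F ≡≡ newvar(P,F)` holds. -/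
theorem newvar_commonEquiv (F : Formula V) (hF : definiteHorn F)
    (P : Finset V) (x : V) (hxF : x ∉ vars F) (hxP : x ∉ P) :
    commonEquiv F (newvar P x F) := by
  have hd : dClause P x ∈ newvar P x F := by
    unfold newvar; simp
  intro C hC
  constructor
  · -- entails F C → entails (newvar P x F) C
    intro h a haG
    apply h
    intro c hc
    by_cases hPc : ∀ p ∈ P, ((p, false) : V × Bool) ∈ c
    · have hc' : (c \ P.image (fun p => ((p,false):V×Bool))) ∪ {((x,false):V×Bool)}
          ∈ newvar P x F := by
        unfold newvar
        simp only [Finset.mem_union, Finset.mem_image, Finset.mem_filter]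
        left; left; exact ⟨c, ⟨hc, hPc⟩, rfl⟩
      obtain ⟨l, hl, hal⟩ := haG _ hc'
      rcases Finset.mem_union.mp hl with hl1 | hl2
      · exact ⟨l, (Finset.mem_sdiff.mp hl1).1, hal⟩
      · have hlx : l = (x, false) := Finset.mem_singleton.mp hl2
        subst hlx
        obtain ⟨l', hl', hal'⟩ := haG _ hd
        unfold dClause at hl'
        rcases Finset.mem_union.mp hl' with h1 | h2
        · obtain ⟨p, hp, rfl⟩ := Finset.mem_image.mp h1
          exact ⟨(p, false), hPc p hp, hal'⟩
        · have := Finset.mem_singleton.mp h2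
          subst this
          simp only at hal hal'
          rw [hal] at hal'; exact absurd hal' (by simp)
    · have : c ∈ newvar P x F := by
        unfold newvar
        simp only [Finset.mem_union, Finset.mem_filter]
        left; right; exact ⟨hc, hPc⟩
      exact haG _ this
  · intro h a haF
    set a' : V → Bool := fun v => if v = x then decide (∀ p ∈ P, a p = true) else a v
      with ha'def
    have hvarF : ∀ c ∈ F, ∀ l ∈ c, l.1 ≠ x := by
      intro c hc l hl hlx
      exact hxF ⟨c, hc, l.2, by rw [← hlx, Prod.mk.eta]; exact hl⟩
    have ha'F : ∀ c ∈ F, ∀ l ∈ c, a' l.1 = a l.1 := by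
      intro c hc l hl
      simp [ha'def, hvarF c hc l hl]
    have ha'G : satF a' (newvar P x F) := by
      intro c hcG
      unfold newvar at hcG
      simp only [Finset.mem_union, Finset.mem_image, Finset.mem_filter,
        Finset.mem_singleton] at hcG
      rcases hcG with (⟨c0, ⟨hc0F, hPc0⟩, rfl⟩ | ⟨hcF, hPc⟩) | rfl
      · by_cases hall : ∀ p ∈ P, a p = true
        · obtain ⟨l, hl, hal⟩ := haF c0 hc0F
          have hlnP : l ∉ P.image (fun p => ((p,false):V×Bool)) := by
            intro hmem
            obtain ⟨p, hp, rfl⟩ := Finset.mem_image.mp hmem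
            rw [hall p hp] at hal; exact absurd hal (by simp)
          refine ⟨l, Finset.mem_union_left _ (Finset.mem_sdiff.mpr ⟨hl, hlnP⟩), ?_⟩
          rw [ha'F c0 hc0F l hl]; exact hal
        · refine ⟨(x, false), Finset.mem_union_right _ (Finset.mem_singleton_self _), ?_⟩
          simp [ha'def, hall]
      · obtain ⟨l, hl, hal⟩ := haF c hcF
        refine ⟨l, hl, ?_⟩
        rw [ha'F c hcF l hl]; exact hal
      · by_cases hall : ∀ p ∈ P, a p = true
        · refine ⟨(x, true), ?_, by simp only [ha'def, if_pos rfl]; exact decide_eq_true hall⟩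
          unfold dClause
          exact Finset.mem_union_right _ (Finset.mem_singleton_self _)
        · push_neg at hall
          obtain ⟨p, hp, hap⟩ := hall
          refine ⟨(p, false), ?_, ?_⟩
          · unfold dClause
            exact Finset.mem_union_left _ (Finset.mem_image_of_mem _ hp)
          · have hpx : p ≠ x := fun hh => hxP (hh ▸ hp)
            simp [ha'def, hpx]
            simpa using hap
    have haC := h a' ha'G
    intro c hc
    obtain ⟨l, hl, hal⟩ := haC c hc
    refine ⟨l, hl, ?_⟩
    have hlvC : l.1 ∈ vars C := ⟨c, hc, l.2, by rw [Prod.mk.eta]; exact hl⟩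
    have hlx : l.1 ≠ x := fun hh => hxF (hh ▸ (hC hlvC).1)
    rw [← hal]; simp [ha'def, hlx]
end

section
/- Let F be a definite Horn formula and A a finite set of variables such that |newvar(A,F)| ≤ |F| (where the new variable used by newvar is fresh). Then there is a nonempty set of clauses of F whose bodies have intersection B satisfying |newvar(B,F)| ≤ |newvar(A,F)|. -/
variable {V : Type} [DecidableEq V]

lemma mem_body' {c : Clause V} {v : V} : v ∈ body c ↔ ((v, false) : V × Bool) ∈ c := by
  simp [body]

lemma fsize_newvar' (F : Formula V) (P : Finset V) (x : V)
    (hx : ∀ c ∈ F, ∀ b : Bool, ((x, b) : V × Bool) ∉ c) (hxP : x ∉ P) :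
    fsize (newvar P x F) =
      (∑ c ∈ F.filter (fun c => ∀ p ∈ P, ((p, false) : V × Bool) ∈ c),
        (c.card - P.card + 1))
      + (∑ c ∈ F.filter (fun c => ¬ ∀ p ∈ P, ((p, false) : V × Bool) ∈ c), c.card)
      + (P.card + 1) := by

  set Pneg : Clause V := P.image (fun p => ((p, false) : V × Bool)) with hPnegdef
  have hPnegcard : Pneg.card = P.card :=
    Finset.card_image_of_injective _ (fun a b h => by simpa using h)
  have hmemPneg : ∀ l : V × Bool, l ∈ Pneg ↔ l.1 ∈ P ∧ l.2 = false := by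
    intro l
    simp only [hPnegdef, Finset.mem_image]
    constructor
    · rintro ⟨p, hp, rfl⟩; exact ⟨hp, rfl⟩
    · rintro ⟨hp, h2⟩; exact ⟨l.1, hp, by rw [← h2]⟩
  have hsub : ∀ c ∈ F.filter (fun c => ∀ p ∈ P, ((p, false) : V × Bool) ∈ c), Pneg ⊆ c := by
    intro c hc l hl
    rw [Finset.mem_filter] at hc
    obtain ⟨hP, h2⟩ := (hmemPneg l).mp hl
    have := hc.2 l.1 hP
    rwa [show ((l.1, false) : V × Bool) = l by rw [← h2]] at this
  -- injectivity of the image map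
  have hinj : ∀ c ∈ F.filter (fun c => ∀ p ∈ P, ((p, false) : V × Bool) ∈ c),
      ∀ c' ∈ F.filter (fun c => ∀ p ∈ P, ((p, false) : V × Bool) ∈ c),
      ((c \ Pneg) ∪ {((x, false) : V × Bool)}) = ((c' \ Pneg) ∪ {((x, false) : V × Bool)}) →
      c = c' := by
    intro c hc c' hc' heq
    have hxc : ((x, false) : V × Bool) ∉ c := hx c (Finset.mem_filter.mp hc).1 false
    have hxc' : ((x, false) : V × Bool) ∉ c' := hx c' (Finset.mem_filter.mp hc').1 false
    have h1 : c \ Pneg = c' \ Pneg := by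
      have h2 : ((c \ Pneg) ∪ {((x, false) : V × Bool)}).erase ((x, false) : V × Bool)
          = c \ Pneg := by
        rw [Finset.erase_union_distrib]
        simp [Finset.erase_eq_of_notMem (fun h => hxc (Finset.mem_sdiff.mp h).1)]
      have h3 : ((c' \ Pneg) ∪ {((x, false) : V × Bool)}).erase ((x, false) : V × Bool)
          = c' \ Pneg := by
        rw [Finset.erase_union_distrib]
        simp [Finset.erase_eq_of_notMem (fun h => hxc' (Finset.mem_sdiff.mp h).1)]
      rw [← h2, ← h3, heq]
    calc c = (c \ Pneg) ∪ Pneg := (Finset.sdiff_union_of_subset (hsub c hc)).symm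
      _ = (c' \ Pneg) ∪ Pneg := by rw [h1]
      _ = c' := Finset.sdiff_union_of_subset (hsub c' hc')
  -- disjointness facts
  have hxtrue_img : ∀ d ∈ (F.filter (fun c => ∀ p ∈ P, ((p, false) : V × Bool) ∈ c)).image
      (fun c => (c \ Pneg) ∪ {((x, false) : V × Bool)}),
      ((x, true) : V × Bool) ∉ d ∧ ((x, false) : V × Bool) ∈ d := by
    intro d hd
    obtain ⟨c, hc, rfl⟩ := Finset.mem_image.mp hd
    constructor
    · intro h
      rcases Finset.mem_union.mp h with h | h
      · exact hx c (Finset.mem_filter.mp hc).1 true (Finset.mem_sdiff.mp h).1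
      · simp at h
    · exact Finset.mem_union_right _ (by simp)
  have hdisj1 : Disjoint
      ((F.filter (fun c => ∀ p ∈ P, ((p, false) : V × Bool) ∈ c)).image
        (fun c => (c \ Pneg) ∪ {((x, false) : V × Bool)}))
      (F.filter (fun c => ¬ ∀ p ∈ P, ((p, false) : V × Bool) ∈ c)) := by
    rw [Finset.disjoint_left]
    intro d hd hd'
    exact hx d (Finset.mem_filter.mp hd').1 false (hxtrue_img d hd).2
  have hxtrue_d : ((x, true) : V × Bool) ∈ dClause P x := by
    simp [dClause]
  have hdisj2 : Disjoint
      (((F.filter (fun c => ∀ p ∈ P, ((p, false) : V × Bool) ∈ c)).image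
        (fun c => (c \ Pneg) ∪ {((x, false) : V × Bool)}))
        ∪ (F.filter (fun c => ¬ ∀ p ∈ P, ((p, false) : V × Bool) ∈ c)))
      ({dClause P x} : Formula V) := by
    rw [Finset.disjoint_right]
    intro d hd hd'
    rw [Finset.mem_singleton] at hd
    subst hd
    rcases Finset.mem_union.mp hd' with h | h
    · exact (hxtrue_img _ h).1 hxtrue_d
    · exact hx _ (Finset.mem_filter.mp h).1 true hxtrue_d
  have hdcard : (dClause P x).card = P.card + 1 := by
    rw [dClause, Finset.card_union_of_disjoint, hPnegcard, Finset.card_singleton]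
    rw [Finset.disjoint_singleton_right]
    intro h
    simpa using (hmemPneg _).mp h
  rw [fsize, newvar, ← hPnegdef, Finset.sum_union hdisj2, Finset.sum_union hdisj1,
    Finset.sum_singleton, Finset.sum_image hinj, hdcard]
  congr 1
  congr 1
  apply Finset.sum_congr rfl
  intro c hc
  have hxc : ((x, false) : V × Bool) ∉ c \ Pneg :=
    fun h => hx c (Finset.mem_filter.mp hc).1 false (Finset.mem_sdiff.mp h).1
  rw [Finset.card_union_of_disjoint (by simpa using hxc), Finset.card_singleton,
    Finset.card_sdiff_of_subset (hsub c hc), hPnegcard]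

/-- if `|newvar(A,F)| ≤ |F|`, then some nonempty set `G` of
clauses of `F`, with `B` the intersection of their bodies, satisfies
`|newvar(B,F)| ≤ |newvar(A,F)|`. -/
theorem newvar_intersection (F : Formula V) (hF : definiteHorn F)
    (A : Finset V) (x : V) (hxF : x ∉ vars F) (hxA : x ∉ A)
    (hle : fsize (newvar A x F) ≤ fsize F) :
    ∃ (G : Formula V) (hG : G.Nonempty), G ⊆ F ∧
      fsize (newvar (G.inf' hG body) x F) ≤ fsize (newvar A x F) := by

  have hx : ∀ c ∈ F, ∀ b : Bool, ((x, b) : V × Bool) ∉ c := by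
    intro c hc b hmem
    exact hxF ⟨c, hc, b, hmem⟩
  set G : Formula V := F.filter (fun c => ∀ p ∈ A, ((p, false) : V × Bool) ∈ c) with hGdef
  have hfA := fsize_newvar' F A x hx hxA
  -- G is nonempty
  have hG : G.Nonempty := by
    by_contra hne
    rw [Finset.not_nonempty_iff_eq_empty] at hne
    have hall : F.filter (fun c => ¬ ∀ p ∈ A, ((p, false) : V × Bool) ∈ c) = F := by
      apply Finset.filter_true_of_mem
      intro c hc hcc
      have : c ∈ G := Finset.mem_filter.mpr ⟨hc, hcc⟩
      simp [hne] at this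
    rw [hfA, ← hGdef, hne, hall, Finset.sum_empty] at hle
    have : fsize F = ∑ c ∈ F, c.card := rfl
    omega
  refine ⟨G, hG, Finset.filter_subset _ _, ?_⟩
  set B : Finset V := G.inf' hG body with hBdef
  have hAB : A ⊆ B := by
    have : A ≤ G.inf' hG body :=
      Finset.le_inf' hG body (fun c hc a ha =>
        mem_body'.mpr ((Finset.mem_filter.mp hc).2 a ha))
    exact this
  have hGB : ∀ c ∈ G, B ⊆ body c := fun c hc => Finset.inf'_le _ hc
  have hxB : x ∉ B := by
    obtain ⟨c, hc⟩ := hG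
    intro hxB
    exact hx c (Finset.mem_filter.mp hc).1 false (mem_body'.mp (hGB c hc hxB))
  have hfB := fsize_newvar' F B x hx hxB
  have hfilterB : F.filter (fun c => ∀ p ∈ B, ((p, false) : V × Bool) ∈ c) = G := by
    ext c
    rw [Finset.mem_filter, hGdef, Finset.mem_filter]
    constructor
    · rintro ⟨hc, hb⟩
      exact ⟨hc, fun p hp => hb p (hAB hp)⟩
    · rintro ⟨hc, ha⟩
      refine ⟨hc, fun p hp => ?_⟩
      exact mem_body'.mp (hGB c (Finset.mem_filter.mpr ⟨hc, ha⟩) hp)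
  have hfilterB' : F.filter (fun c => ¬ ∀ p ∈ B, ((p, false) : V × Bool) ∈ c)
      = F.filter (fun c => ¬ ∀ p ∈ A, ((p, false) : V × Bool) ∈ c) := by
    rw [Finset.filter_not, Finset.filter_not, hfilterB, hGdef]
  have hcardAB : A.card ≤ B.card := Finset.card_le_card hAB
  have hcardc : ∀ c ∈ G, B.card ≤ c.card := by
    intro c hc
    calc B.card ≤ (body c).card := Finset.card_le_card (hGB c hc)
      _ ≤ (c.filter (fun l => l.2 = false)).card := Finset.card_image_le
      _ ≤ c.card := Finset.card_filter_le _ _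
  have hsum : ∑ c ∈ G, (c.card - A.card + 1)
      = (∑ c ∈ G, (c.card - B.card + 1)) + G.card * (B.card - A.card) := by
    rw [Finset.sum_congr rfl (fun c hc => show c.card - A.card + 1
        = (c.card - B.card + 1) + (B.card - A.card) by
      have h1 := hcardc c hc
      have h2 := hcardAB
      omega), Finset.sum_add_distrib, Finset.sum_const, smul_eq_mul]
  have hk : 1 ≤ G.card := Finset.card_pos.mpr hG
  have hmul : B.card - A.card ≤ G.card * (B.card - A.card) :=
    Nat.le_mul_of_pos_left _ hk
  rw [hfA, hfB, hfilterB, hfilterB', ← hGdef, hsum]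
  omega
end
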